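/- arXiv:2605.25867 — 3 statements merged into one kernel-verified Lean document; each statement's English description precedes it below -/
import Mathlib

section
/- Let Ω be a compact metric space, let (μ_n) be a sequence of Borel probability measures on Ω converging weakly to a Borel probability measure μ, and let φ : Ω → H be a continuous map into a real Hilbert space H. Then the Bochner integrals ∫_Ω φ dμ_n converge strongly in H to ∫_Ω φ dμ. -/
open MeasureTheory Filter Topology

/-- If Borel probability measures `μ_n` on a compact metric space `Ω`
converge weakly to `μ` (tested against bounded continuous real functions), and
`φ : Ω → H` is a continuous map into a real Hilbert space `H`, then the Bochner
integrals `∫ φ dμ_n` converge strongly in `H` to `∫ φ dμ`. -/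
theorem weak_convergence_bochner_integral
    {H : Type*} [NormedAddCommGroup H] [InnerProductSpace ℝ H] [CompleteSpace H]
    {Ω : Type*} [MetricSpace Ω] [CompactSpace Ω] [MeasurableSpace Ω] [BorelSpace Ω]
    (μseq : ℕ → Measure Ω) (μ : Measure Ω)
    (hμn : ∀ n, IsProbabilityMeasure (μseq n)) (hμ : IsProbabilityMeasure μ)
    (hweak : ∀ f : Ω → ℝ, Continuous f → (∃ C, ∀ x, |f x| ≤ C) →
      Tendsto (fun n => ∫ y, f y ∂(μseq n)) atTop (𝓝 (∫ y, f y ∂μ)))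
    (φ : Ω → H) (hφ : Continuous φ) :
    Tendsto (fun n => ∫ y, φ y ∂(μseq n)) atTop (𝓝 (∫ y, φ y ∂μ)) := by
  by_cases hΩ : Nonempty Ω
  swap
  · simp only [not_nonempty_iff] at hΩ
    have h1 : (∫ y, φ y ∂μ) = 0 := by
      rw [integral_eq_zero_of_ae]; exact (ae_of_all _ (fun x => (hΩ.false x).elim))
    have h2 : ∀ n, (∫ y, φ y ∂(μseq n)) = 0 := by
      intro n
      rw [integral_eq_zero_of_ae]; exact (ae_of_all _ (fun x => (hΩ.false x).elim))
    simp only [h1, h2]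
    exact tendsto_const_nhds
  rw [Metric.tendsto_atTop]
  intro ε hε
  -- uniform continuity of φ
  obtain ⟨δ, hδ, hδ'⟩ := Metric.uniformContinuous_iff.mp
    (CompactSpace.uniformContinuous_of_continuous hφ) (ε/4) (by positivity)
  -- finite cover by δ-balls
  obtain ⟨t, ht⟩ := isCompact_univ.elim_finite_subcover (fun i : Ω => Metric.ball i δ)
    (fun i => Metric.isOpen_ball)
    (fun x _ => Set.mem_iUnion.mpr ⟨x, Metric.mem_ball_self hδ⟩)
  -- partition of unity
  set g : Ω → Ω → ℝ := fun i x => max (δ - dist x i) 0 with hg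
  have hgc : ∀ i, Continuous (g i) := fun i =>
    (continuous_const.sub (continuous_id.dist continuous_const)).max continuous_const
  have hgnn : ∀ i x, 0 ≤ g i x := fun i x => le_max_right _ _
  set S : Ω → ℝ := fun x => ∑ i ∈ t, g i x with hS
  have hSc : Continuous S := continuous_finset_sum _ fun i _ => (hgc i)
  have hgleS : ∀ i ∈ t, ∀ x, g i x ≤ S x := fun i hi x =>
    Finset.single_le_sum (fun j _ => hgnn j x) hi
  have hSpos : ∀ x, 0 < S x := by
    intro x
    obtain ⟨i, hi, hxi⟩ := Set.mem_iUnion₂.mp (ht (Set.mem_univ x))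
    have hgi : 0 < g i x := lt_max_of_lt_left (by
      have := Metric.mem_ball.mp hxi; linarith)
    exact lt_of_lt_of_le hgi (hgleS i hi x)
  set χ : Ω → Ω → ℝ := fun i x => g i x / S x with hχ
  have hχc : ∀ i, Continuous (χ i) := fun i => (hgc i).div hSc (fun x => (hSpos x).ne')
  have hχnn : ∀ i x, 0 ≤ χ i x := fun i x => div_nonneg (hgnn i x) (hSpos x).le
  have hχle : ∀ i ∈ t, ∀ x, χ i x ≤ 1 := fun i hi x =>
    (div_le_one (hSpos x)).mpr (hgleS i hi x)
  have hsum : ∀ x, ∑ i ∈ t, χ i x = 1 := by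
    intro x
    simp only [hχ, ← Finset.sum_div]
    exact div_self (hSpos x).ne'
  -- approximant
  set ψ : Ω → H := fun x => ∑ i ∈ t, χ i x • φ i with hψ
  have hψc : Continuous ψ := continuous_finset_sum _ fun i _ => (hχc i).smul continuous_const
  -- pointwise error bound
  have herr : ∀ x, ‖φ x - ψ x‖ ≤ ε / 4 := by
    intro x
    have h1 : φ x - ψ x = ∑ i ∈ t, χ i x • (φ x - φ i) := by
      simp only [smul_sub, Finset.sum_sub_distrib, ← Finset.sum_smul, hsum x, one_smul, hψ]
    rw [h1]
    calc ‖∑ i ∈ t, χ i x • (φ x - φ i)‖ ≤ ∑ i ∈ t, ‖χ i x • (φ x - φ i)‖ :=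
          norm_sum_le _ _
      _ ≤ ∑ i ∈ t, χ i x * (ε / 4) := by
          apply Finset.sum_le_sum
          intro i hi
          rw [norm_smul, Real.norm_eq_abs, abs_of_nonneg (hχnn i x)]
          rcases eq_or_lt_of_le (hgnn i x) with h0 | h0
          · simp [hχ, ← h0]
          · have hdist : dist x i < δ := by
              have : 0 < δ - dist x i := by
                by_contra hcon
                push_neg at hcon
                simp only [hg] at h0
                rw [max_eq_right hcon] at h0
                exact lt_irrefl _ h0
              linarith
            have := hδ' hdist
            rw [dist_eq_norm] at this
            exact mul_le_mul_of_nonneg_left this.le (hχnn i x)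
      _ = ε / 4 := by rw [← Finset.sum_mul, hsum x, one_mul]
  -- integrability
  have hcs : ∀ f : Ω → H, HasCompactSupport f := fun f =>
    IsCompact.of_isClosed_subset isCompact_univ (isClosed_tsupport f) (Set.subset_univ _)
  have hφint : ∀ (ν : Measure Ω), IsProbabilityMeasure ν → Integrable φ ν := by
    intro ν hν
    exact hφ.integrable_of_hasCompactSupport (hcs φ)
  have hψint : ∀ (ν : Measure Ω), IsProbabilityMeasure ν → Integrable ψ ν := by
    intro ν hν
    exact hψc.integrable_of_hasCompactSupport (hcs ψ)
  -- integral error bound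
  have hI : ∀ (ν : Measure Ω), IsProbabilityMeasure ν →
      ‖(∫ y, φ y ∂ν) - ∫ y, ψ y ∂ν‖ ≤ ε / 4 := by
    intro ν hν
    rw [← integral_sub (hφint ν hν) (hψint ν hν)]
    calc ‖∫ y, (φ y - ψ y) ∂ν‖ ≤ (ε / 4) * (ν Set.univ).toReal :=
          norm_integral_le_of_norm_le_const (ae_of_all _ herr)
      _ = ε / 4 := by simp
  -- integral of ψ as a finite sum
  have hψeq : ∀ (ν : Measure Ω), IsProbabilityMeasure ν →
      (∫ y, ψ y ∂ν) = ∑ i ∈ t, (∫ y, χ i y ∂ν) • φ i := by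
    intro ν hν
    rw [hψ]
    rw [integral_finset_sum]
    · exact Finset.sum_congr rfl fun i _ => integral_smul_const _ _
    · intro i _
      exact (((hχc i).smul continuous_const).integrable_of_hasCompactSupport (hcs _))
  -- convergence of the approximant integrals
  have hconv : Tendsto (fun n => ∫ y, ψ y ∂(μseq n)) atTop (𝓝 (∫ y, ψ y ∂μ)) := by
    have : Tendsto (fun n => ∑ i ∈ t, (∫ y, χ i y ∂(μseq n)) • φ i) atTop
        (𝓝 (∑ i ∈ t, (∫ y, χ i y ∂μ) • φ i)) := by
      apply tendsto_finset_sum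
      intro i hi
      exact (hweak (χ i) (hχc i) ⟨1, fun x => by
        rw [abs_of_nonneg (hχnn i x)]; exact hχle i hi x⟩).smul_const (φ i)
    have h1 : (fun n => ∫ y, ψ y ∂(μseq n)) =
        fun n => ∑ i ∈ t, (∫ y, χ i y ∂(μseq n)) • φ i := by
      funext n; exact hψeq (μseq n) (hμn n)
    rw [h1, hψeq μ hμ]
    exact this
  rw [Metric.tendsto_atTop] at hconv
  obtain ⟨N, hN⟩ := hconv (ε / 4) (by positivity)
  refine ⟨N, fun n hn => ?_⟩
  calc dist (∫ y, φ y ∂(μseq n)) (∫ y, φ y ∂μ)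
      ≤ dist (∫ y, φ y ∂(μseq n)) (∫ y, ψ y ∂(μseq n))
        + dist (∫ y, ψ y ∂(μseq n)) (∫ y, ψ y ∂μ)
        + dist (∫ y, ψ y ∂μ) (∫ y, φ y ∂μ) := dist_triangle4 _ _ _ _
    _ < ε := by
        have h1 := hI (μseq n) (hμn n)
        have h2 := hN n hn
        have h3 := hI μ hμ
        simp only [dist_eq_norm] at h1 h2 h3 ⊢
        rw [norm_sub_rev] at h3
        linarith
end

section
/- Suppose z_n → z strongly in H and the Borel probability measures μ_n on Ω converge weakly to the Borel probability measure μ. Then the forcing values converge strongly in H: B_{μ_n}(z_n) → B_μ(z). In particular one has the splitting ‖B_{μ_n}(z_n) − B_μ(z)‖ ≤ L_b · L_G · ‖z_n − z‖ + ‖B_{μ_n}(z) − B_μ(z)‖, where the first (state-error) term vanishes by the uniform Lipschitz estimate and the second (measure-error) term vanishes by weak convergence tested against the continuous bounded H-valued function y ↦ G(z,y) • b(y). -/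
open MeasureTheory Filter Topology

/-- Every continuous function on a compact space is integrable w.r.t. a finite measure. -/
lemma continuous_integrable_aux {H : Type*} [NormedAddCommGroup H]
    {Ω : Type*} [MetricSpace Ω] [CompactSpace Ω] [MeasurableSpace Ω] [BorelSpace Ω]
    (ν : Measure Ω) [IsFiniteMeasure ν] (f : Ω → H) (hf : Continuous f) :
    Integrable f ν :=
  hf.integrable_of_hasCompactSupport (HasCompactSupport.of_compactSpace f)

/-- Weak convergence of probability measures implies convergence of Bochner integrals
of continuous (vector-valued) functions, via a partition-of-unity approximation. -/
lemma tendsto_integral_of_weak_aux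
    {H : Type*} [NormedAddCommGroup H] [NormedSpace ℝ H] [CompleteSpace H]
    {Ω : Type*} [MetricSpace Ω] [CompactSpace Ω] [MeasurableSpace Ω] [BorelSpace Ω]
    (μseq : ℕ → Measure Ω) (μ : Measure Ω)
    (hμn : ∀ n, IsProbabilityMeasure (μseq n)) (hμ : IsProbabilityMeasure μ)
    (hweak : ∀ f : Ω → ℝ, Continuous f → (∃ C, ∀ x, |f x| ≤ C) →
      Tendsto (fun n => ∫ y, f y ∂(μseq n)) atTop (𝓝 (∫ y, f y ∂μ)))
    (f : Ω → H) (hf : Continuous f) :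
    Tendsto (fun n => ∫ y, f y ∂(μseq n)) atTop (𝓝 (∫ y, f y ∂μ)) := by
  rw [Metric.tendsto_atTop]
  intro ε hε
  -- uniform continuity of f
  obtain ⟨δ, hδ, hδf⟩ := Metric.uniformContinuous_iff.mp
    (CompactSpace.uniformContinuous_of_continuous hf) (ε / 4) (by positivity)
  -- finite subcover by balls of radius δ/2
  obtain ⟨t, ht⟩ := isCompact_univ.elim_finite_subcover
    (fun y : Ω => Metric.ball y (δ / 2)) (fun y => Metric.isOpen_ball)
    (by intro x _; exact Set.mem_iUnion.mpr ⟨x, Metric.mem_ball_self (by linarith)⟩)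
  -- bump functions
  set ψ : Ω → Ω → ℝ := fun i y => max (δ / 2 - dist y i) 0 with hψdef
  have hψ_cont : ∀ i, Continuous fun y => ψ i y := fun i =>
    (continuous_const.sub (continuous_id.dist continuous_const)).max continuous_const
  have hψ_nonneg : ∀ i y, 0 ≤ ψ i y := fun i y => le_max_right _ _
  set S : Ω → ℝ := fun y => ∑ i ∈ t, ψ i y with hSdef
  have hS_cont : Continuous S := continuous_finset_sum _ fun i _ => hψ_cont i
  have hS_pos : ∀ y, 0 < S y := by
    intro y
    obtain ⟨i, hi, hyi⟩ := Set.mem_iUnion₂.mp (ht (Set.mem_univ y))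
    refine Finset.sum_pos' (fun j _ => hψ_nonneg j y) ⟨i, hi, ?_⟩
    have : dist y i < δ / 2 := Metric.mem_ball.mp hyi
    exact lt_max_of_lt_left (by linarith)
  set φ : Ω → Ω → ℝ := fun i y => ψ i y / S y with hφdef
  have hφ_cont : ∀ i, Continuous fun y => φ i y := fun i =>
    (hψ_cont i).div hS_cont fun y => (hS_pos y).ne'
  have hφ_nonneg : ∀ i y, 0 ≤ φ i y := fun i y =>
    div_nonneg (hψ_nonneg i y) (hS_pos y).le
  have hφ_le_one : ∀ i ∈ t, ∀ y, φ i y ≤ 1 := by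
    intro i hi y
    rw [div_le_one (hS_pos y)]
    exact Finset.single_le_sum (fun j _ => hψ_nonneg j y) hi
  have hφ_sum : ∀ y, ∑ i ∈ t, φ i y = 1 := by
    intro y
    rw [hφdef]
    simp only
    rw [← Finset.sum_div, div_self (hS_pos y).ne']
  -- pointwise approximation of f by the finite combination
  have hpt : ∀ y, ‖f y - ∑ i ∈ t, φ i y • f i‖ ≤ ε / 4 := by
    intro y
    have h1 : f y - ∑ i ∈ t, φ i y • f i = ∑ i ∈ t, φ i y • (f y - f i) := by
      simp only [smul_sub, Finset.sum_sub_distrib, ← Finset.sum_smul, hφ_sum, one_smul]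
    rw [h1]
    calc ‖∑ i ∈ t, φ i y • (f y - f i)‖ ≤ ∑ i ∈ t, ‖φ i y • (f y - f i)‖ :=
          norm_sum_le _ _
      _ ≤ ∑ i ∈ t, φ i y * (ε / 4) := by
          refine Finset.sum_le_sum fun i _ => ?_
          rw [norm_smul, Real.norm_eq_abs, abs_of_nonneg (hφ_nonneg i y)]
          rcases eq_or_lt_of_le (hφ_nonneg i y) with h | h
          · rw [← h]; simp
          · refine mul_le_mul_of_nonneg_left ?_ (hφ_nonneg i y)
            have hψpos : 0 < ψ i y := by
              by_contra hcon
              push_neg at hcon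
              have : ψ i y = 0 := le_antisymm hcon (hψ_nonneg i y)
              rw [hφdef] at h; simp only at h
              rw [this, zero_div] at h; exact lt_irrefl _ h
            have hdist : dist y i < δ / 2 := by
              by_contra hcon
              push_neg at hcon
              have : ψ i y = 0 := max_eq_right (by linarith)
              rw [this] at hψpos; exact lt_irrefl _ hψpos
            have := hδf (show dist y i < δ by linarith)
            rw [← dist_eq_norm]
            exact this.le
      _ = ε / 4 := by rw [← Finset.sum_mul, hφ_sum, one_mul]
  -- integral approximation for any probability measure
  have happrox : ∀ ν : Measure Ω, IsProbabilityMeasure ν →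
      ‖(∫ y, f y ∂ν) - ∑ i ∈ t, (∫ y, φ i y ∂ν) • f i‖ ≤ ε / 4 := by
    intro ν hν
    have hint_f : Integrable f ν := continuous_integrable_aux ν f hf
    have hint_g : Integrable (fun y => ∑ i ∈ t, φ i y • f i) ν :=
      continuous_integrable_aux ν _
        (continuous_finset_sum _ fun i _ => (hφ_cont i).smul continuous_const)
    have h1 : ∑ i ∈ t, (∫ y, φ i y ∂ν) • f i = ∫ y, ∑ i ∈ t, φ i y • f i ∂ν := by
      rw [integral_finset_sum]
      · exact Finset.sum_congr rfl fun i _ => (integral_smul_const _ _).symm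
      · exact fun i _ => continuous_integrable_aux ν _ ((hφ_cont i).smul continuous_const)
    rw [h1, ← integral_sub hint_f hint_g]
    have := norm_integral_le_of_norm_le_const (μ := ν) (C := ε / 4)
      (f := fun y => f y - ∑ i ∈ t, φ i y • f i) (Filter.Eventually.of_forall fun y => hpt y)
    simpa using this
  -- convergence of the finite combination
  have hA : Tendsto (fun n => ∑ i ∈ t, (∫ y, φ i y ∂(μseq n)) • f i) atTop
      (𝓝 (∑ i ∈ t, (∫ y, φ i y ∂μ) • f i)) := by
    refine tendsto_finset_sum _ fun i hi => ?_
    exact (hweak (fun y => φ i y) (hφ_cont i)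
      ⟨1, fun x => abs_le.mpr ⟨by linarith [hφ_nonneg i x], hφ_le_one i hi x⟩⟩).smul_const _
  have hA' : ∀ᶠ n in atTop,
      ‖(∑ i ∈ t, (∫ y, φ i y ∂(μseq n)) • f i) - ∑ i ∈ t, (∫ y, φ i y ∂μ) • f i‖ < ε / 4 :=
    (tendsto_iff_norm_sub_tendsto_zero.mp hA).eventually (eventually_lt_nhds (by positivity))
  obtain ⟨N, hN⟩ := eventually_atTop.mp hA'
  refine ⟨N, fun n hn => ?_⟩
  have h1 := happrox (μseq n) (hμn n)
  have h2 := happrox μ hμ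
  have h3 := hN n hn
  rw [dist_eq_norm]
  calc ‖(∫ y, f y ∂(μseq n)) - ∫ y, f y ∂μ‖
      ≤ ‖(∫ y, f y ∂(μseq n)) - ∑ i ∈ t, (∫ y, φ i y ∂(μseq n)) • f i‖ +
        ‖(∑ i ∈ t, (∫ y, φ i y ∂(μseq n)) • f i) - ∑ i ∈ t, (∫ y, φ i y ∂μ) • f i‖ +
        ‖(∑ i ∈ t, (∫ y, φ i y ∂μ) • f i) - ∫ y, f y ∂μ‖ := by
          have := norm_sub_le_norm_sub_add_norm_sub
            (∫ y, f y ∂(μseq n)) (∑ i ∈ t, (∫ y, φ i y ∂(μseq n)) • f i) (∫ y, f y ∂μ)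
          have h4 := norm_sub_le_norm_sub_add_norm_sub
            (∑ i ∈ t, (∫ y, φ i y ∂(μseq n)) • f i) (∑ i ∈ t, (∫ y, φ i y ∂μ) • f i)
            (∫ y, f y ∂μ)
          linarith
    _ < ε := by
        have h2' : ‖(∑ i ∈ t, (∫ y, φ i y ∂μ) • f i) - ∫ y, f y ∂μ‖ ≤ ε / 4 := by
          rw [norm_sub_rev]; exact h2
        linarith

/-- If `z_n → z` strongly in `H` and the Borel probability measures
`μ_n` converge weakly to `μ`, then the forcing values converge strongly:
`B_{μ_n}(z_n) → B_μ(z)`.  In particular one has the splitting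
`‖B_{μ_n}(z_n) − B_μ(z)‖ ≤ L_b·L_G·‖z_n − z‖ + ‖B_{μ_n}(z) − B_μ(z)‖`. -/
theorem forcing_convergence_state_and_measure
    {H : Type*} [NormedAddCommGroup H] [InnerProductSpace ℝ H] [CompleteSpace H]
    {Ω : Type*} [MetricSpace Ω] [CompactSpace Ω] [MeasurableSpace Ω] [BorelSpace Ω]
    (Lb Mbar LG : ℝ) (hLb : 0 ≤ Lb) (hMbar : 0 ≤ Mbar) (hLG : 0 ≤ LG)
    (b : Ω → H) (hb_cont : Continuous b) (hb_bd : ∀ y, ‖b y‖ ≤ Lb)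
    (G : H → Ω → ℝ)
    (hG_bd : ∀ z y, |G z y| ≤ Mbar)
    (hG_lip : ∀ z₁ z₂ y, |G z₁ y - G z₂ y| ≤ LG * ‖z₁ - z₂‖)
    (hG_cont : ∀ z : H, Continuous fun y => G z y)
    (μseq : ℕ → Measure Ω) (μ : Measure Ω)
    (hμn : ∀ n, IsProbabilityMeasure (μseq n)) (hμ : IsProbabilityMeasure μ)
    (hweak : ∀ f : Ω → ℝ, Continuous f → (∃ C, ∀ x, |f x| ≤ C) →
      Tendsto (fun n => ∫ y, f y ∂(μseq n)) atTop (𝓝 (∫ y, f y ∂μ)))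
    (zseq : ℕ → H) (z : H) (hz : Tendsto zseq atTop (𝓝 z)) :
    Tendsto (fun n => ∫ y, G (zseq n) y • b y ∂(μseq n)) atTop
      (𝓝 (∫ y, G z y • b y ∂μ)) ∧
    ∀ n, ‖(∫ y, G (zseq n) y • b y ∂(μseq n)) - ∫ y, G z y • b y ∂μ‖ ≤
      Lb * LG * ‖zseq n - z‖ +
      ‖(∫ y, G z y • b y ∂(μseq n)) - ∫ y, G z y • b y ∂μ‖ := by
  haveI := hμ
  have hint : ∀ (w : H) (ν : Measure Ω), IsFiniteMeasure ν →
      Integrable (fun y => G w y • b y) ν := by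
    intro w ν hν
    exact continuous_integrable_aux ν _ ((hG_cont w).smul hb_cont)
  -- the splitting inequality
  have hsplit : ∀ n, ‖(∫ y, G (zseq n) y • b y ∂(μseq n)) - ∫ y, G z y • b y ∂μ‖ ≤
      Lb * LG * ‖zseq n - z‖ +
      ‖(∫ y, G z y • b y ∂(μseq n)) - ∫ y, G z y • b y ∂μ‖ := by
    intro n
    haveI := hμn n
    have hi1 := hint (zseq n) (μseq n) inferInstance
    have hi2 := hint z (μseq n) inferInstance
    have key : ‖(∫ y, G (zseq n) y • b y ∂(μseq n)) - ∫ y, G z y • b y ∂(μseq n)‖ ≤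
        Lb * LG * ‖zseq n - z‖ := by
      rw [← integral_sub hi1 hi2]
      have hbd : ∀ y, ‖G (zseq n) y • b y - G z y • b y‖ ≤ Lb * LG * ‖zseq n - z‖ := by
        intro y
        rw [← sub_smul, norm_smul, Real.norm_eq_abs]
        calc |G (zseq n) y - G z y| * ‖b y‖ ≤ (LG * ‖zseq n - z‖) * Lb := by
              apply mul_le_mul (hG_lip _ _ _) (hb_bd y) (norm_nonneg _)
              positivity
          _ = Lb * LG * ‖zseq n - z‖ := by ring
      have := norm_integral_le_of_norm_le_const (μ := μseq n)
        (C := Lb * LG * ‖zseq n - z‖)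
        (f := fun y => G (zseq n) y • b y - G z y • b y)
        (Filter.Eventually.of_forall hbd)
      simpa using this
    calc ‖(∫ y, G (zseq n) y • b y ∂(μseq n)) - ∫ y, G z y • b y ∂μ‖
        ≤ ‖(∫ y, G (zseq n) y • b y ∂(μseq n)) - ∫ y, G z y • b y ∂(μseq n)‖ +
          ‖(∫ y, G z y • b y ∂(μseq n)) - ∫ y, G z y • b y ∂μ‖ :=
          norm_sub_le_norm_sub_add_norm_sub _ _ _
      _ ≤ _ := by gcongr
  refine ⟨?_, hsplit⟩
  -- convergence: squeeze via the splitting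
  have h1 : Tendsto (fun n => Lb * LG * ‖zseq n - z‖) atTop (𝓝 0) := by
    have : Tendsto (fun n => ‖zseq n - z‖) atTop (𝓝 0) :=
      tendsto_iff_norm_sub_tendsto_zero.mp hz
    simpa using this.const_mul (Lb * LG)
  have h2 : Tendsto (fun n =>
      ‖(∫ y, G z y • b y ∂(μseq n)) - ∫ y, G z y • b y ∂μ‖) atTop (𝓝 0) := by
    have := tendsto_integral_of_weak_aux μseq μ hμn hμ hweak
      (fun y => G z y • b y) ((hG_cont z).smul hb_cont)
    exact tendsto_iff_norm_sub_tendsto_zero.mp this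
  rw [tendsto_iff_norm_sub_tendsto_zero]
  have hbound : Tendsto (fun n => Lb * LG * ‖zseq n - z‖ +
      ‖(∫ y, G z y • b y ∂(μseq n)) - ∫ y, G z y • b y ∂μ‖) atTop (𝓝 0) := by
    simpa using h1.add h2
  exact squeeze_zero (fun n => norm_nonneg _) hsplit hbound
end

section
/- Let B₁, B₂ : H → H both be Lipschitz with constant L, suppose L · C_T < 1, and assume sup_{v ∈ H} ‖B₁(v) − B₂(v)‖ ≤ ε for some ε ≥ 0. Let z₁ and z₂ be the fixed points in C([0,T]; H) of the Picard maps built from B₁ and B₂ respectively, with the same initial datum z₀. Then sup_{t ∈ [0,T]} ‖z₁(t) − z₂(t)‖ ≤ (C_T · ε) / (1 − L · C_T). In particular the mild solution depends stably on the forcing operator, which identifies the limit of the discrete mild solutions with the mean-field mild solution when the forcings converge uniformly. -/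
/-! The difference `z₁ - z₂` of the two fixed points is the Duhamel integral of
`S(t-s)(B₁(z₁ s) - B₂(z₂ s))`, whose integrand is bounded by `‖S(t-s)‖ (L D + ε)` where `D` is
the maximum of `‖z₁ - z₂‖` on `[0,T]`. Evaluating at a point where this maximum is attained gives
`D ≤ C_T (L D + ε)`, and `L C_T < 1` lets one solve for `D`. -/

open MeasureTheory Filter Topology

/-- The Picard map `Φ(z)(t) = S(t) z₀ + ∫₀ᵗ S(t−s)(B(z(s))) ds`. -/
noncomputable def picardMap {H : Type*} [NormedAddCommGroup H] [InnerProductSpace ℝ H]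
    [CompleteSpace H] (S : ℝ → H →L[ℝ] H) (B : H → H) (z₀ : H) (z : ℝ → H) (t : ℝ) : H :=
  S t z₀ + ∫ s in (0:ℝ)..t, S (t - s) (B (z s))

open Set

theorem ContinuousOn.clm_apply_of_norm_le {X 𝕜 E F : Type*} [TopologicalSpace X]
    [NontriviallyNormedField 𝕜] [SeminormedAddCommGroup E] [NormedSpace 𝕜 E]
    [SeminormedAddCommGroup F] [NormedSpace 𝕜 F]
    {S : X → E →L[𝕜] F} {g : X → E} {K : Set X} {M : ℝ}
    (hS : ∀ x, ContinuousOn (fun t => S t x) K) (hS_bd : ∀ t ∈ K, ‖S t‖ ≤ M)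
    (hg : ContinuousOn g K) : ContinuousOn (fun t => S t (g t)) K := by
  intro t₀ ht₀
  have hsmall : Tendsto (fun t => S t (g t - g t₀)) (𝓝[K] t₀) (𝓝 0) := by
    have hg₀ : Tendsto (fun t => M * ‖g t - g t₀‖) (𝓝[K] t₀) (𝓝 0) := by
      simpa using (((hg t₀ ht₀).sub_const (g t₀)).norm).const_mul M
    refine squeeze_zero_norm' ?_ hg₀
    filter_upwards [self_mem_nhdsWithin] with t ht
    exact (S t).le_of_opNorm_le (hS_bd t ht) _
  simpa [ContinuousWithinAt, map_sub] using hsmall.add (hS (g t₀) t₀ ht₀)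

theorem IntegrableOn.intervalIntegrable_comp_sub_left {E : Type*} [NormedAddCommGroup E]
    {f : ℝ → E} {T t : ℝ} (hf : IntegrableOn f (Icc 0 T)) (ht : t ∈ Icc 0 T) :
    IntervalIntegrable (fun s => f (t - s)) volume 0 t := by
  have hf' : IntervalIntegrable f volume 0 t :=
    (intervalIntegrable_iff_integrableOn_Icc_of_le ht.1).2 (hf.mono_set (Icc_subset_Icc_right ht.2))
  simpa using (hf'.comp_sub_left t).symm

theorem intervalIntegral.norm_integral_clm_apply_le {𝕜 E F : Type*} [NontriviallyNormedField 𝕜]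
    [NormedAddCommGroup E] [NormedSpace 𝕜 E] [NormedAddCommGroup F] [NormedSpace 𝕜 F]
    [NormedSpace ℝ F] {K : ℝ → E →L[𝕜] F} {u : ℝ → E} {a b c : ℝ} (hab : a ≤ b)
    (hKu : IntervalIntegrable (fun s => K s (u s)) volume a b)
    (hK : IntervalIntegrable (fun s => ‖K s‖) volume a b) (hu : ∀ s ∈ Icc a b, ‖u s‖ ≤ c) :
    ‖∫ s in a..b, K s (u s)‖ ≤ (∫ s in a..b, ‖K s‖) * c := by
  calc ‖∫ s in a..b, K s (u s)‖ ≤ ∫ s in a..b, ‖K s (u s)‖ :=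
        intervalIntegral.norm_integral_le_integral_norm hab
    _ ≤ ∫ s in a..b, ‖K s‖ * c :=
        intervalIntegral.integral_mono_on hab hKu.norm (hK.mul_const c)
          fun s hs => (K s).le_of_opNorm_le_of_le le_rfl (hu s hs)
    _ = (∫ s in a..b, ‖K s‖) * c := intervalIntegral.integral_mul_const c _

theorem intervalIntegrable_picard_integrand {E : Type*} [NormedAddCommGroup E]
    [NormedSpace ℝ E] {S : ℝ → E →L[ℝ] E} {T M : ℝ}
    (hS_cont : ∀ x : E, ContinuousOn (fun t => S t x) (Icc 0 T))
    (hS_bd : ∀ t ∈ Icc (0:ℝ) T, ‖S t‖ ≤ M) {g : ℝ → E} (hg : ContinuousOn g (Icc 0 T))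
    {t : ℝ} (ht : t ∈ Icc 0 T) :
    IntervalIntegrable (fun s => S (t - s) (g s)) volume 0 t := by
  have hmaps : MapsTo (fun s => t - s) (Icc 0 t) (Icc 0 T) :=
    fun s hs => ⟨sub_nonneg.2 hs.2, by linarith [hs.1, ht.2]⟩
  refine ContinuousOn.intervalIntegrable ?_
  rw [uIcc_of_le ht.1]
  exact ContinuousOn.clm_apply_of_norm_le
    (fun x => (hS_cont x).comp (continuousOn_const.sub continuousOn_id) hmaps)
    (fun s hs => hS_bd _ (hmaps hs)) (hg.mono (Icc_subset_Icc_right ht.2))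

theorem norm_picardMap_sub_le {H : Type*} [NormedAddCommGroup H] [InnerProductSpace ℝ H]
    [CompleteSpace H] {S : ℝ → H →L[ℝ] H} {T M : ℝ}
    (hS_cont : ∀ x : H, ContinuousOn (fun t => S t x) (Icc 0 T))
    (hS_bd : ∀ t ∈ Icc (0:ℝ) T, ‖S t‖ ≤ M) (hS_int : IntegrableOn (fun s => ‖S s‖) (Icc 0 T))
    {B₁ B₂ : H → H} (hB₁ : Continuous B₁) (hB₂ : Continuous B₂) (z₀ : H) {z₁ z₂ : ℝ → H}
    (hz₁ : ContinuousOn z₁ (Icc 0 T)) (hz₂ : ContinuousOn z₂ (Icc 0 T)) {c : ℝ}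
    (hc : ∀ s ∈ Icc 0 T, ‖B₁ (z₁ s) - B₂ (z₂ s)‖ ≤ c) {t : ℝ} (ht : t ∈ Icc 0 T) :
    ‖picardMap S B₁ z₀ z₁ t - picardMap S B₂ z₀ z₂ t‖ ≤ (∫ s in (0:ℝ)..t, ‖S (t - s)‖) * c := by
  have h₁ : IntervalIntegrable (fun s => S (t - s) (B₁ (z₁ s))) volume 0 t :=
    intervalIntegrable_picard_integrand hS_cont hS_bd (hB₁.comp_continuousOn hz₁) ht
  have h₂ : IntervalIntegrable (fun s => S (t - s) (B₂ (z₂ s))) volume 0 t :=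
    intervalIntegrable_picard_integrand hS_cont hS_bd (hB₂.comp_continuousOn hz₂) ht
  have hdiff : picardMap S B₁ z₀ z₁ t - picardMap S B₂ z₀ z₂ t =
      ∫ s in (0:ℝ)..t, S (t - s) (B₁ (z₁ s) - B₂ (z₂ s)) := by
    simp only [picardMap, map_sub]
    rw [intervalIntegral.integral_sub h₁ h₂]
    abel
  rw [hdiff]
  exact intervalIntegral.norm_integral_clm_apply_le ht.1 (by simpa only [map_sub] using h₁.sub h₂)
    (IntegrableOn.intervalIntegrable_comp_sub_left hS_int ht)
    fun s hs => hc s ⟨hs.1, hs.2.trans ht.2⟩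

theorem picard_fixed_point_stability_general
    {H : Type*} [NormedAddCommGroup H] [InnerProductSpace ℝ H] [CompleteSpace H]
    (T : ℝ) (M_S C_T : ℝ)
    (S : ℝ → H →L[ℝ] H)
    (hS_cont : ∀ x : H, ContinuousOn (fun t => S t x) (Set.Icc 0 T))
    (hS_bd : ∀ t ∈ Set.Icc (0:ℝ) T, ‖S t‖ ≤ M_S)
    (hS_int : IntegrableOn (fun s => ‖S s‖) (Set.Icc (0:ℝ) T))
    (hS_CT : ∀ t ∈ Set.Icc (0:ℝ) T, (∫ s in (0:ℝ)..t, ‖S (t - s)‖) ≤ C_T)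
    (B₁ B₂ : H → H) (L : ℝ) (hL : 0 ≤ L)
    (hB₁_lip : ∀ v w : H, ‖B₁ v - B₁ w‖ ≤ L * ‖v - w‖)
    (hB₂_lip : ∀ v w : H, ‖B₂ v - B₂ w‖ ≤ L * ‖v - w‖)
    (hsmall : L * C_T < 1)
    (ε : ℝ) (hε : 0 ≤ ε) (hB_close : ∀ v : H, ‖B₁ v - B₂ v‖ ≤ ε)
    (z₀ : H) (z₁ z₂ : ℝ → H)
    (hz₁_cont : ContinuousOn z₁ (Set.Icc 0 T))
    (hz₁_fix : ∀ t ∈ Set.Icc (0:ℝ) T, picardMap S B₁ z₀ z₁ t = z₁ t)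
    (hz₂_cont : ContinuousOn z₂ (Set.Icc 0 T))
    (hz₂_fix : ∀ t ∈ Set.Icc (0:ℝ) T, picardMap S B₂ z₀ z₂ t = z₂ t) :
    ∀ t ∈ Set.Icc (0:ℝ) T, ‖z₁ t - z₂ t‖ ≤ (C_T * ε) / (1 - L * C_T) := by
  intro t ht
  have hB₁ : Continuous B₁ :=
    (LipschitzWith.of_dist_le' (by simpa only [dist_eq_norm] using hB₁_lip)).continuous
  have hB₂ : Continuous B₂ :=
    (LipschitzWith.of_dist_le' (by simpa only [dist_eq_norm] using hB₂_lip)).continuous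
  obtain ⟨t₀, ht₀, hmax⟩ := isCompact_Icc.exists_isMaxOn ⟨t, ht⟩ (hz₁_cont.sub hz₂_cont).norm
  set D := ‖z₁ t₀ - z₂ t₀‖
  have hB_diff : ∀ s ∈ Icc 0 T, ‖B₁ (z₁ s) - B₂ (z₂ s)‖ ≤ L * D + ε := fun s hs =>
    calc ‖B₁ (z₁ s) - B₂ (z₂ s)‖ ≤ ‖B₁ (z₁ s) - B₁ (z₂ s)‖ + ‖B₁ (z₂ s) - B₂ (z₂ s)‖ :=
          norm_sub_le_norm_sub_add_norm_sub _ _ _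
      _ ≤ L * D + ε :=
          add_le_add ((hB₁_lip _ _).trans (mul_le_mul_of_nonneg_left (hmax hs) hL)) (hB_close _)
  have hD : D ≤ C_T * (L * D + ε) :=
    calc D = ‖picardMap S B₁ z₀ z₁ t₀ - picardMap S B₂ z₀ z₂ t₀‖ := by
          rw [hz₁_fix t₀ ht₀, hz₂_fix t₀ ht₀]
      _ ≤ (∫ s in (0:ℝ)..t₀, ‖S (t₀ - s)‖) * (L * D + ε) :=
          norm_picardMap_sub_le hS_cont hS_bd hS_int hB₁ hB₂ z₀ hz₁_cont hz₂_cont hB_diff ht₀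
      _ ≤ C_T * (L * D + ε) := by gcongr; exact hS_CT t₀ ht₀
  calc ‖z₁ t - z₂ t‖ ≤ D := hmax ht
    _ ≤ C_T * ε / (1 - L * C_T) := by
        rw [le_div_iff₀ (sub_pos.2 hsmall)]
        linarith

/-- If `B₁, B₂` are both `L`-Lipschitz, `L·C_T < 1`, and
`‖B₁(v) − B₂(v)‖ ≤ ε` for all `v`, then the corresponding fixed points `z₁, z₂`
of the Picard maps (same initial datum `z₀`) satisfy
`sup_{t∈[0,T]} ‖z₁(t) − z₂(t)‖ ≤ C_T·ε / (1 − L·C_T)`. -/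
theorem picard_fixed_point_stability
    {H : Type*} [NormedAddCommGroup H] [InnerProductSpace ℝ H] [CompleteSpace H]
    (T : ℝ) (hT : 0 < T) (M_S C_T : ℝ)
    (S : ℝ → H →L[ℝ] H)
    (hS_cont : ∀ x : H, ContinuousOn (fun t => S t x) (Set.Icc 0 T))
    (hS_bd : ∀ t ∈ Set.Icc (0:ℝ) T, ‖S t‖ ≤ M_S)
    (hS_int : IntegrableOn (fun s => ‖S s‖) (Set.Icc (0:ℝ) T))
    (hS_CT : ∀ t ∈ Set.Icc (0:ℝ) T, (∫ s in (0:ℝ)..t, ‖S (t - s)‖) ≤ C_T)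
    (B₁ B₂ : H → H) (L : ℝ) (hL : 0 ≤ L)
    (hB₁_lip : ∀ v w : H, ‖B₁ v - B₁ w‖ ≤ L * ‖v - w‖)
    (hB₂_lip : ∀ v w : H, ‖B₂ v - B₂ w‖ ≤ L * ‖v - w‖)
    (hsmall : L * C_T < 1)
    (ε : ℝ) (hε : 0 ≤ ε) (hB_close : ∀ v : H, ‖B₁ v - B₂ v‖ ≤ ε)
    (z₀ : H) (z₁ z₂ : ℝ → H)
    (hz₁_cont : ContinuousOn z₁ (Set.Icc 0 T))
    (hz₁_fix : ∀ t ∈ Set.Icc (0:ℝ) T, picardMap S B₁ z₀ z₁ t = z₁ t)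
    (hz₂_cont : ContinuousOn z₂ (Set.Icc 0 T))
    (hz₂_fix : ∀ t ∈ Set.Icc (0:ℝ) T, picardMap S B₂ z₀ z₂ t = z₂ t) :
    ∀ t ∈ Set.Icc (0:ℝ) T, ‖z₁ t - z₂ t‖ ≤ (C_T * ε) / (1 - L * C_T) :=
  picard_fixed_point_stability_general T M_S C_T S hS_cont hS_bd hS_int hS_CT B₁ B₂ L hL hB₁_lip
    hB₂_lip hsmall ε hε hB_close z₀ z₁ z₂ hz₁_cont hz₁_fix hz₂_cont hz₂_fix
end
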